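/- arXiv:1910.03765 — 3 statements merged into one kernel-verified Lean document; each statement's English description precedes it below -/
import Mathlib

section
/- Let D = {(x,y) ∈ ℝ² : |y| < x and |y| < 2 - x} ⊂ ℂ. For every t > 0, every integer n ≤ -2, and every z in the closure of D, one has |z + 2n| · |e^{-(z+2n)²/(4t)}| ≤ 4|n| e^{-n²/(4t)}. -/
/-! Write `z = x + iy` with `|y| ≤ min x (2 - x)`. Then `‖z + 2n‖ ≤ |x + 2n| + |y| ≤ 2|n|`, and the
Gaussian factor has modulus `exp (-((x + 2n)² - y²) / 4t)`, so it suffices that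
`(x + 2n)² - y² ≥ n²`. Bounding `y²` by `x²` on the left half of the square and by `(2 - x)²` on the
right half reduces this to the two elementary inequalities `3n² ≥ -4nx` for `x ≤ 1` and
`3n² ≥ 4 - 4x - 4nx` for `x ≥ 1`. -/

open Complex

/-- The open square `D` with vertices `0, 1+i, 2, 1-i`, viewed in `ℂ` via `z = x + iy`. -/
def Dsq : Set ℂ := {z : ℂ | |z.im| < z.re ∧ |z.im| < 2 - z.re}

lemma abs_im_le_of_mem_closure_Dsq {z : ℂ} (hz : z ∈ closure Dsq) :
    |z.im| ≤ z.re ∧ |z.im| ≤ 2 - z.re := by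
  have hclosed : IsClosed {w : ℂ | |w.im| ≤ w.re ∧ |w.im| ≤ 2 - w.re} :=
    (isClosed_le continuous_im.abs continuous_re).inter
      (isClosed_le continuous_im.abs (continuous_const.sub continuous_re))
  refine closure_minimal ?_ hclosed hz
  exact fun _ hw => ⟨hw.1.le, hw.2.le⟩

lemma norm_exp_neg_sq_div (w : ℂ) (s : ℝ) :
    ‖exp (-w ^ 2 / s)‖ = Real.exp (-(w.re ^ 2 - w.im ^ 2) / s) := by
  rw [norm_exp, div_ofReal_re]
  congr 2
  simp only [neg_re, sq, mul_re]

lemma norm_add_two_mul_le {z : ℂ} {n : ℝ} (hz : |z.im| ≤ z.re) (hz2 : z.re ≤ 2) (hn : n ≤ -1) :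
    ‖z + 2 * n‖ ≤ 2 * |n| := by
  calc ‖z + 2 * n‖ ≤ |z.re + 2 * n| + |z.im| := by
        simpa using norm_le_abs_re_add_abs_im (z + 2 * n)
    _ = -(z.re + 2 * n) + |z.im| := by rw [abs_of_nonpos (a := z.re + 2 * n) (by linarith)]
    _ ≤ 2 * |n| := by rw [abs_of_neg (a := n) (by linarith)]; linarith

lemma sq_le_sq_add_two_mul_sub_sq {x y n : ℝ} (hyx : |y| ≤ x) (hyx' : |y| ≤ 2 - x)
    (hn : n ≤ -2) : n ^ 2 ≤ (x + 2 * n) ^ 2 - y ^ 2 := by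
  rcases le_total x 1 with hx | hx
  · have hy : y ^ 2 ≤ x ^ 2 := sq_le_sq' (abs_le.mp hyx).1 (abs_le.mp hyx).2
    nlinarith [mul_nonneg (show 0 ≤ -n by linarith) (show 0 ≤ 1 - x by linarith)]
  · have hy : y ^ 2 ≤ (2 - x) ^ 2 := sq_le_sq' (abs_le.mp hyx').1 (abs_le.mp hyx').2
    nlinarith [mul_nonneg (show 0 ≤ -n - 1 by linarith) (show 0 ≤ 2 - x by linarith [abs_nonneg y]),
      mul_nonneg (show 0 ≤ -n - 2 by linarith) (show 0 ≤ -3 * n - 2 by linarith)]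

/-- For `t > 0`, `n ≤ -2` and `z` in the closure of `D`,
`|z + 2n| · |e^{-(z+2n)²/(4t)}| ≤ 4|n| e^{-n²/(4t)}`. -/
theorem heat_kernel_bound_neg_n (t : ℝ) (ht : 0 < t) (n : ℤ) (hn : n ≤ -2)
    (z : ℂ) (hz : z ∈ closure Dsq) :
    ‖z + 2 * (n : ℂ)‖ * ‖Complex.exp (-(z + 2 * (n : ℂ)) ^ 2 / (4 * (t : ℂ)))‖ ≤
      4 * |(n : ℝ)| * Real.exp (-(n : ℝ) ^ 2 / (4 * t)) := by
  obtain ⟨hyx, hyx'⟩ := abs_im_le_of_mem_closure_Dsq hz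
  have hnR : (n : ℝ) ≤ -2 := by exact_mod_cast hn
  have hnorm : ‖z + 2 * (n : ℂ)‖ ≤ 4 * |(n : ℝ)| :=
    (norm_add_two_mul_le hyx (by linarith [abs_nonneg z.im]) (by linarith)).trans
      (by linarith [abs_nonneg (n : ℝ)])
  have hgauss : ‖exp (-(z + 2 * (n : ℂ)) ^ 2 / (4 * (t : ℂ)))‖ ≤
      Real.exp (-(n : ℝ) ^ 2 / (4 * t)) := by
    rw [show (4 * (t : ℂ)) = ((4 * t : ℝ) : ℂ) by push_cast; ring, norm_exp_neg_sq_div,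
      Real.exp_le_exp]
    gcongr
    simpa using sq_le_sq_add_two_mul_sub_sq hyx hyx' hnR
  exact mul_le_mul hnorm hgauss (norm_nonneg _) (by positivity)
end

section
/- Let F be a compact subset of D = {(x,y) : |y| < x, |y| < 2-x} ⊂ ℂ, let t > 0, and let z₀ ∈ F attain min_{z∈F} Re(z²). Then for all z ∈ F, ∫₀ᵗ |∂ₓK(z, t-τ)|² dτ ≤ (1/(π (Re z₀²)²)) (1 + Re(z₀²)/(2t)) e^{-Re(z₀²)/(2t)}, where ∂ₓK(z,s) = -z/(4√π s^{3/2}) e^{-z²/(4s)}. -/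
/-!
With `s = t - τ` and `a = Re z²`, `‖∂ₓK(z, s)‖² = ‖z‖²/(16π) · s⁻³ e^{-a/(2s)}`, which has the
explicit primitive `‖z‖²/(4π a²) · φ(a/(2s))` with `φ u = (1 + u) e^{-u}`. Since `φ u → 0` as
`u → ∞`, the integral equals `‖z‖²/(4π a²) · φ(a/(2t))`. On `D` we have `‖z‖² < 4` and
`a ≥ Re z₀² > 0`, and `φ` decreases on `[0, ∞)`.
-/

open Complex MeasureTheory

/-- `∂ₓK(z,s) = -z/(4√π s^{3/2}) e^{-z²/(4s)}`. -/
noncomputable def dxK (z : ℂ) (t : ℝ) : ℂ :=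
  -z / (4 * Real.sqrt Real.pi * (t ^ ((3:ℝ)/2) : ℝ)) * Complex.exp (-z ^ 2 / (4 * (t : ℂ)))

open Filter Set Topology

theorem hasDerivAt_one_add_mul_exp_neg (u : ℝ) :
    HasDerivAt (fun u : ℝ => (1 + u) * Real.exp (-u)) (-u * Real.exp (-u)) u :=
  (((hasDerivAt_id u).const_add 1).mul (hasDerivAt_neg u).exp).congr_deriv
    (by simp only [id]; ring)

theorem antitoneOn_one_add_mul_exp_neg :
    AntitoneOn (fun u : ℝ => (1 + u) * Real.exp (-u)) (Ici 0) := by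
  refine antitoneOn_of_deriv_nonpos (convex_Ici 0) ?_ ?_ ?_
  · fun_prop
  · exact fun u _ => (hasDerivAt_one_add_mul_exp_neg u).differentiableAt.differentiableWithinAt
  · intro u hu
    rw [interior_Ici] at hu
    rw [(hasDerivAt_one_add_mul_exp_neg u).deriv, neg_mul, neg_nonpos]
    exact mul_nonneg (mem_Ioi.1 hu).le (Real.exp_pos _).le

theorem tendsto_one_add_mul_exp_neg_atTop :
    Tendsto (fun u : ℝ => (1 + u) * Real.exp (-u)) atTop (𝓝 0) := by
  have := Real.tendsto_exp_neg_atTop_nhds_zero.add (Real.tendsto_pow_mul_exp_neg_atTop_nhds_zero 1)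
  rw [add_zero] at this
  exact this.congr fun u => by ring

theorem intervalIntegral.integral_eq_sub_of_hasDerivAt_of_tendsto_of_nonneg {f f' : ℝ → ℝ}
    {a b fa : ℝ} (hab : a < b) (hderiv : ∀ x ∈ Ioc a b, HasDerivAt f (f' x) x)
    (hpos : ∀ x ∈ Ioo a b, 0 ≤ f' x) (ha : Tendsto f (𝓝[>] a) (𝓝 fa)) :
    ∫ x in a..b, f' x = f b - fa := by
  classical
  have hderiv' : ∀ x ∈ Ioo a b, HasDerivAt f (f' x) x :=
    fun x hx => hderiv x (Ioo_subset_Ioc_self hx)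
  have hcont : ContinuousOn (Function.update f a fa) (Icc a b) := by
    rw [continuousOn_update_iff, Icc_sdiff_left]
    exact ⟨fun x hx => (hderiv x hx).continuousAt.continuousWithinAt,
      fun _ => ha.mono_left (nhdsWithin_mono _ Ioc_subset_Ioi_self)⟩
  have hint : IntervalIntegrable f' volume a b :=
    (intervalIntegrable_iff_integrableOn_Ioc_of_le hab.le).2 <|
      integrableOn_deriv_of_nonneg hcont (fun x hx => (hderiv' x hx).congr_of_eventuallyEq <| by
        filter_upwards [Ioi_mem_nhds hx.1] with y hy using Function.update_of_ne hy.ne' _ _) hpos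
  exact integral_eq_sub_of_hasDerivAt_of_tendsto hab hderiv' hint ha
    ((hderiv b (right_mem_Ioc.2 hab)).continuousAt.tendsto.mono_left nhdsWithin_le_nhds)

theorem hasDerivAt_one_add_div_mul_exp_neg_div {a s : ℝ} (ha : a ≠ 0) (hs : s ≠ 0) :
    HasDerivAt (fun s : ℝ => 4 / a ^ 2 * ((1 + a / (2 * s)) * Real.exp (-(a / (2 * s)))))
      ((s ^ 3)⁻¹ * Real.exp (-(a / (2 * s)))) s := by
  have hu := (hasDerivAt_const s a).div ((hasDerivAt_id s).const_mul 2) (by simpa using hs)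
  refine (((hasDerivAt_one_add_mul_exp_neg _).comp s hu).const_mul (4 / a ^ 2)).congr_deriv ?_
  simp only [id, Pi.div_apply]
  field_simp
  ring

theorem integral_inv_pow_three_mul_exp_neg_div {a t : ℝ} (ha : 0 < a) (ht : 0 < t) :
    ∫ s in (0)..t, (s ^ 3)⁻¹ * Real.exp (-(a / (2 * s))) =
      4 / a ^ 2 * ((1 + a / (2 * t)) * Real.exp (-(a / (2 * t)))) := by
  have hlim : Tendsto (fun s : ℝ => a / (2 * s)) (𝓝[>] 0) atTop := by
    refine (tendsto_inv_nhdsGT_zero.const_mul_atTop (by positivity : 0 < a / 2)).congr fun s => ?_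
    field_simp
  rw [intervalIntegral.integral_eq_sub_of_hasDerivAt_of_tendsto_of_nonneg ht
    (fun s hs => hasDerivAt_one_add_div_mul_exp_neg_div ha.ne' hs.1.ne')
    (fun s hs => by have := hs.1; positivity)
    ((tendsto_one_add_mul_exp_neg_atTop.comp hlim).const_mul (4 / a ^ 2)), mul_zero, sub_zero]

theorem norm_dxK_sq (z : ℂ) {s : ℝ} (hs : 0 < s) :
    ‖dxK z s‖ ^ 2 =
      ‖z‖ ^ 2 / (16 * Real.pi) * ((s ^ 3)⁻¹ * Real.exp (-((z ^ 2).re / (2 * s)))) := by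
  have hre : (-z ^ 2 / (4 * (s : ℂ))).re = -((z ^ 2).re / (4 * s)) := by
    rw [show (4 * (s : ℂ)) = ((4 * s : ℝ) : ℂ) by push_cast; ring, Complex.div_ofReal_re, neg_re,
      neg_div]
  have hpow : (s ^ ((3 : ℝ) / 2)) ^ 2 = s ^ 3 := by
    rw [← Real.rpow_natCast, ← Real.rpow_mul hs.le]; norm_num
  rw [dxK, norm_mul, norm_div, norm_neg, Complex.norm_exp, hre, mul_pow, div_pow,
    ← Real.exp_nat_mul]
  simp only [norm_mul, Complex.norm_real, Complex.norm_ofNat, Real.norm_eq_abs,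
    abs_of_pos (Real.rpow_pos_of_pos hs _), abs_of_nonneg (Real.sqrt_nonneg _)]
  rw [mul_pow, mul_pow, hpow, Real.sq_sqrt Real.pi_nonneg]
  field_simp
  ring_nf

theorem integral_norm_dxK_sq {z : ℂ} {t : ℝ} (ha : 0 < (z ^ 2).re) (ht : 0 < t) :
    ∫ τ in Ioo 0 t, ‖dxK z (t - τ)‖ ^ 2 = ‖z‖ ^ 2 / (4 * Real.pi * ((z ^ 2).re) ^ 2) *
      ((1 + (z ^ 2).re / (2 * t)) * Real.exp (-((z ^ 2).re / (2 * t)))) := by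
  rw [← integral_Ioc_eq_integral_Ioo, ← intervalIntegral.integral_of_le ht.le,
    intervalIntegral.integral_comp_sub_left (fun s => ‖dxK z s‖ ^ 2), sub_self, sub_zero,
    intervalIntegral.integral_congr_ae (Eventually.of_forall fun s hs =>
      norm_dxK_sq z (uIoc_of_le ht.le ▸ hs).1),
    intervalIntegral.integral_const_mul, integral_inv_pow_three_mul_exp_neg_div ha ht]
  field_simp
  ring

theorem re_sq_pos_of_abs_im_lt_re {z : ℂ} (h : |z.im| < z.re) : 0 < (z ^ 2).re := by
  rw [sq, mul_re, ← sq, ← sq, sub_pos, ← sq_abs z.im]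
  exact pow_lt_pow_left₀ h (abs_nonneg _) two_ne_zero

theorem norm_sq_lt_four_of_mem_Dsq {z : ℂ} (hz : z ∈ Dsq) : ‖z‖ ^ 2 < 4 := by
  obtain ⟨h₁, h₂⟩ := hz
  rw [Complex.sq_norm, normSq_apply]
  nlinarith [sq_abs z.im, abs_nonneg z.im]

theorem integral_sq_bound_on_compact_general (F : Set ℂ) (hFD : F ⊆ Dsq)
    (t : ℝ) (ht : 0 < t) (z₀ : ℂ) (hz₀ : z₀ ∈ F)
    (hmin : ∀ z ∈ F, (z₀ ^ 2).re ≤ (z ^ 2).re) :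
    ∀ z ∈ F,
      ∫ τ in Set.Ioo (0:ℝ) t, ‖dxK z (t - τ)‖ ^ 2 ≤
        (1 / (Real.pi * ((z₀ ^ 2).re) ^ 2)) * (1 + (z₀ ^ 2).re / (2 * t)) *
          Real.exp (-(z₀ ^ 2).re / (2 * t)) := by
  intro z hz
  have ha₀ : 0 < (z₀ ^ 2).re := re_sq_pos_of_abs_im_lt_re (hFD hz₀).1
  have hle : (z₀ ^ 2).re ≤ (z ^ 2).re := hmin z hz
  have ha : 0 < (z ^ 2).re := ha₀.trans_le hle
  have hcoeff :
      ‖z‖ ^ 2 / (4 * Real.pi * ((z ^ 2).re) ^ 2) ≤ 1 / (Real.pi * ((z₀ ^ 2).re) ^ 2) :=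
    calc ‖z‖ ^ 2 / (4 * Real.pi * ((z ^ 2).re) ^ 2)
        ≤ 4 / (4 * Real.pi * ((z ^ 2).re) ^ 2) := by
          gcongr; exact (norm_sq_lt_four_of_mem_Dsq (hFD hz)).le
      _ = 1 / (Real.pi * ((z ^ 2).re) ^ 2) := by field_simp
      _ ≤ 1 / (Real.pi * ((z₀ ^ 2).re) ^ 2) := by gcongr
  have hdecay := antitoneOn_one_add_mul_exp_neg
    (mem_Ici.2 (by positivity : 0 ≤ (z₀ ^ 2).re / (2 * t)))
    (mem_Ici.2 (by positivity : 0 ≤ (z ^ 2).re / (2 * t))) (by gcongr)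
  rw [integral_norm_dxK_sq ha ht, neg_div]
  exact (mul_le_mul hcoeff hdecay (by positivity) (by positivity)).trans_eq (by ring)

/-- For a compact `F ⊆ D`, `t > 0` and `z₀ ∈ F` minimizing `Re(z²)` over `F`, for all `z ∈ F`:
`∫₀ᵗ |∂ₓK(z, t-τ)|² dτ ≤ (1/(π (Re z₀²)²))(1 + Re(z₀²)/(2t)) e^{-Re(z₀²)/(2t)}`. -/
theorem integral_sq_bound_on_compact (F : Set ℂ) (hF : IsCompact F) (hFD : F ⊆ Dsq)
    (t : ℝ) (ht : 0 < t) (z₀ : ℂ) (hz₀ : z₀ ∈ F)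
    (hmin : ∀ z ∈ F, (z₀ ^ 2).re ≤ (z ^ 2).re) :
    ∀ z ∈ F,
      ∫ τ in Set.Ioo (0:ℝ) t, ‖dxK z (t - τ)‖ ^ 2 ≤
        (1 / (Real.pi * ((z₀ ^ 2).re) ^ 2)) * (1 + (z₀ ^ 2).re / (2 * t)) *
          Real.exp (-(z₀ ^ 2).re / (2 * t)) :=
  integral_sq_bound_on_compact_general F hFD t ht z₀ hz₀ hmin
end

section
/- For all integers n, m with |n| ≥ 3 and |m| ≥ 3, and all z, w in the closure of D (the closed square with vertices 0, 1+i, 2, 1-i), one has |(z + 2n)² + (w̄ + 2m)²| ≥ 4(n² + m² - 2|n| - 2|m| - 2) ≥ 16. -/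
open Complex

/-!
On the closed square, `0 ≤ Re z ≤ 2` and `(Im z)² ≤ 1`, so `Re (z + 2N)² ≥ (2|N| - 2)² - 1`
as soon as `|N| ≥ 1`. Since `w̄ + 2m` is the conjugate of `w + 2m`, the real part of the sum of
squares is the sum of two such real parts, and the modulus dominates the real part. The second
inequality is `n² - 2|n| ≥ 3` for `|n| ≥ 3`.
-/

lemma closure_Dsq_subset : closure Dsq ⊆ {z : ℂ | |z.im| ≤ z.re ∧ |z.im| ≤ 2 - z.re} :=
  closure_minimal (fun _ hz => ⟨hz.1.le, hz.2.le⟩) <| by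
    rw [Set.ofPred_and]
    exact (isClosed_le (by fun_prop) (by fun_prop)).inter (isClosed_le (by fun_prop) (by fun_prop))

lemma two_mul_abs_sub_two_sq_le_add_two_mul_sq {a N : ℝ} (ha₀ : 0 ≤ a) (ha₂ : a ≤ 2)
    (hN : 1 ≤ |N|) : (2 * |N| - 2) ^ 2 ≤ (a + 2 * N) ^ 2 := by
  rcases abs_cases N with ⟨hN', _⟩ | ⟨hN', _⟩ <;> nlinarith

lemma le_re_add_two_mul_sq_of_mem_closure_Dsq {z : ℂ} (hz : z ∈ closure Dsq) {N : ℝ}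
    (hN : 1 ≤ |N|) : (2 * |N| - 2) ^ 2 - 1 ≤ ((z + 2 * N) ^ 2).re := by
  obtain ⟨him_le_re, him_le_two_sub_re⟩ := closure_Dsq_subset hz
  have him : z.im ^ 2 ≤ 1 := by
    rw [← sq_abs]
    nlinarith [abs_nonneg z.im]
  have hsq := two_mul_abs_sub_two_sq_le_add_two_mul_sq (abs_nonneg _ |>.trans him_le_re)
    (by linarith [abs_nonneg z.im]) hN
  have hre : ((z + 2 * N) ^ 2).re = (z.re + 2 * N) ^ 2 - z.im ^ 2 := by
    simp [sq]
  linarith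

/-- For `|n|, |m| ≥ 3` and `z, w ∈ cl(D)`:
`|(z+2n)² + (w̄+2m)²| ≥ 4(n² + m² - 2|n| - 2|m| - 2) ≥ 16`. -/
theorem modulus_lower_bound (n m : ℤ) (hn : 3 ≤ |n|) (hm : 3 ≤ |m|)
    (z w : ℂ) (hz : z ∈ closure Dsq) (hw : w ∈ closure Dsq) :
    4 * ((n : ℝ) ^ 2 + (m : ℝ) ^ 2 - 2 * |(n : ℝ)| - 2 * |(m : ℝ)| - 2) ≤
      ‖(z + 2 * (n : ℂ)) ^ 2 + ((starRingEnd ℂ) w + 2 * (m : ℂ)) ^ 2‖ ∧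
    (16 : ℝ) ≤ 4 * ((n : ℝ) ^ 2 + (m : ℝ) ^ 2 - 2 * |(n : ℝ)| - 2 * |(m : ℝ)| - 2) := by
  have hn' : (3 : ℝ) ≤ |(n : ℝ)| := by exact_mod_cast hn
  have hm' : (3 : ℝ) ≤ |(m : ℝ)| := by exact_mod_cast hm
  have hz' := le_re_add_two_mul_sq_of_mem_closure_Dsq hz (N := n) (by linarith)
  have hw' := le_re_add_two_mul_sq_of_mem_closure_Dsq hw (N := m) (by linarith)
  push_cast at hz' hw'
  have hconj : (starRingEnd ℂ) w + 2 * (m : ℂ) = starRingEnd ℂ (w + 2 * (m : ℂ)) := by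
    rw [map_add, map_mul, map_intCast, map_ofNat]
  refine ⟨?_, by nlinarith [sq_abs (n : ℝ), sq_abs (m : ℝ)]⟩
  calc _ ≤ ((2 * |(n : ℝ)| - 2) ^ 2 - 1) + ((2 * |(m : ℝ)| - 2) ^ 2 - 1) := by
        nlinarith [sq_abs (n : ℝ), sq_abs (m : ℝ)]
    _ ≤ ((z + 2 * (n : ℂ)) ^ 2).re + ((w + 2 * (m : ℂ)) ^ 2).re := add_le_add hz' hw'
    _ = ((z + 2 * (n : ℂ)) ^ 2 + ((starRingEnd ℂ) w + 2 * (m : ℂ)) ^ 2).re := by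
        rw [hconj, ← map_pow, add_re, conj_re]
    _ ≤ _ := re_le_norm _
end
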